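/- Fix a real number q > 1 and an integer n ≥ 1. Then ψ_z(n) is real for every real z with 0 < z < τ/2, and there exists a real z with 0 < z < τ/2 such that ψ_z(n) = 0. -/

import Mathlib

/-- `q^w = exp(w log q)`. -/
noncomputable def qpow (q : ℝ) (w : ℂ) : ℂ := Complex.exp (w * (Real.log q : ℂ))

/-- `τ = 2π / log q`. -/
noncomputable def tauq (q : ℝ) : ℝ := 2 * Real.pi / Real.log q

/-- The elementary spherical function value `φ_z(n)` on a homogeneous tree of degree
`q+1`: `φ_z(0) = 1` and for `n ≥ 1`,
`φ_z(n) = (1/(q+1))·[q^{1-n/2}(q^{iz(n+1)} - q^{-iz(n+1)}) - q^{-n/2}(q^{iz(n-1)} - q^{-iz(n-1)})] / (q^{iz} - q^{-iz})`. -/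
noncomputable def phiSph (q : ℝ) (z : ℂ) (n : ℕ) : ℂ :=
  if n = 0 then 1 else
    (1 / ((q : ℂ) + 1)) *
      ((qpow q (1 - (n : ℂ) / 2) *
          (qpow q (Complex.I * z * ((n : ℂ) + 1)) - qpow q (-(Complex.I * z) * ((n : ℂ) + 1))) -
        qpow q (-(n : ℂ) / 2) *
          (qpow q (Complex.I * z * ((n : ℂ) - 1)) - qpow q (-(Complex.I * z) * ((n : ℂ) - 1)))) /
        (qpow q (Complex.I * z) - qpow q (-(Complex.I * z))))

/-- `B_n = 1 + ∑_{j=1}^n (q+1) q^{j-1}`, the volume of the ball of radius `n`. -/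
noncomputable def ballVol (q : ℝ) (n : ℕ) : ℝ :=
  1 + ∑ j ∈ Finset.Icc 1 n, (q + 1) * q ^ (j - 1)

/-- The ball-average symbol `ψ_z(n) = (1/B_n)·(1 + ∑_{j=1}^n (q+1) q^{j-1} φ_z(j))`. -/
noncomputable def psiBall (q : ℝ) (z : ℂ) (n : ℕ) : ℂ :=
  (1 / ((ballVol q n : ℝ) : ℂ)) *
    (1 + ∑ j ∈ Finset.Icc 1 n, (((q + 1) * q ^ (j - 1) : ℝ) : ℂ) * phiSph q z j)

/-!
At real `z`, put `θ = z log q`. Then `φ_z(j) sin θ` is real, and the weighted terms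
`(q+1) q^(j-1) φ_z(j) sin θ = q^(j/2) sin((j+1)θ) - q^((j-2)/2) sin((j-1)θ)` telescope, so
`B_n ψ_z(n) sin θ = q^(n/2) sin((n+1)θ) + q^((n-1)/2) sin(nθ)`.
Since `q^(n/2) ≥ q^((n-1)/2) ≥ 0`, this is nonnegative at `θ = π/(n+1)` and nonpositive at
`θ = 3π/(2(n+1))`, so by the intermediate value theorem it vanishes for some `θ ∈ (0, π)`,
i.e. for some `z ∈ (0, τ/2)`.
-/

open Real Finset

lemma qpow_ofReal {q : ℝ} (hq : 0 < q) (c : ℝ) : qpow q c = ((q ^ c : ℝ) : ℂ) := by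
  rw [qpow, rpow_def_of_pos hq, mul_comm, ← Complex.ofReal_mul, Complex.ofReal_exp]

lemma qpow_I_mul_sub_qpow_neg (q z c : ℝ) :
    qpow q (Complex.I * z * c) - qpow q (-(Complex.I * z) * c) =
      2 * sin (c * (z * log q)) * Complex.I := by
  have h1 : Complex.I * z * c * log q = (c * (z * log q) : ℝ) * Complex.I := by push_cast; ring
  have h2 : -(Complex.I * z) * c * log q = -(c * (z * log q) : ℝ) * Complex.I := by
    push_cast; ring
  rw [qpow, qpow, h1, h2, Complex.exp_mul_I, Complex.exp_mul_I, Complex.cos_neg, Complex.sin_neg,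
    Complex.ofReal_sin]
  ring

noncomputable def sphericalReal (q θ : ℝ) (n : ℕ) : ℝ :=
  (q ^ (1 - (n : ℝ) / 2) * sin ((n + 1) * θ) - q ^ (-(n : ℝ) / 2) * sin ((n - 1) * θ)) /
    ((q + 1) * sin θ)

lemma phiSph_ofReal {q : ℝ} (hq : 0 < q) (z : ℝ) {n : ℕ} (hn : n ≠ 0) :
    phiSph q z n = sphericalReal q (z * log q) n := by
  have h1 : (1 : ℂ) - (n : ℂ) / 2 = ((1 - (n : ℝ) / 2 : ℝ) : ℂ) := by push_cast; ring
  have h2 : -(n : ℂ) / 2 = ((-(n : ℝ) / 2 : ℝ) : ℂ) := by push_cast; ring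
  have h3 : (n : ℂ) + 1 = (((n : ℝ) + 1 : ℝ) : ℂ) := by push_cast; ring
  have h4 : (n : ℂ) - 1 = (((n : ℝ) - 1 : ℝ) : ℂ) := by push_cast; ring
  have h5 := qpow_I_mul_sub_qpow_neg q z 1
  simp only [Complex.ofReal_one, mul_one, one_mul] at h5
  rw [phiSph, if_neg hn, h1, h2, h3, h4, qpow_ofReal hq, qpow_ofReal hq, qpow_I_mul_sub_qpow_neg,
    qpow_I_mul_sub_qpow_neg, h5, sphericalReal]
  by_cases hs : sin (z * log q) = 0
  · simp [hs]
  · field_simp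
    push_cast
    ring

noncomputable def ballSumReal (q θ : ℝ) (n : ℕ) : ℝ :=
  1 + ∑ j ∈ Icc 1 n, (q + 1) * q ^ (j - 1) * sphericalReal q θ j

lemma psiBall_ofReal {q : ℝ} (hq : 0 < q) (z : ℝ) (n : ℕ) :
    psiBall q z n = ((ballSumReal q (z * log q) n / ballVol q n : ℝ) : ℂ) := by
  have hsum : ∑ j ∈ Icc 1 n, (((q + 1) * q ^ (j - 1) : ℝ) : ℂ) * phiSph q z j =
      ((∑ j ∈ Icc 1 n, (q + 1) * q ^ (j - 1) * sphericalReal q (z * log q) j : ℝ) : ℂ) := by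
    push_cast
    refine sum_congr rfl fun j hj => ?_
    rw [phiSph_ofReal hq z (by simp at hj; omega)]
  rw [psiBall, hsum, ballSumReal]
  push_cast
  ring

lemma mul_sphericalReal_succ_mul_sin {q θ : ℝ} (hq : 0 < q) (hs : sin θ ≠ 0) (j : ℕ) :
    (q + 1) * q ^ j * sphericalReal q θ (j + 1) * sin θ =
      q ^ (((j : ℝ) + 1) / 2) * sin ((j + 2) * θ) - q ^ (((j : ℝ) - 1) / 2) * sin (j * θ) := by
  have hpow (a b : ℝ) (hab : a = b + j) : q ^ j * q ^ b = q ^ a := by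
    rw [← rpow_natCast, ← rpow_add hq, hab, add_comm]
  rw [sphericalReal, ← hpow (((j : ℝ) + 1) / 2) (1 - ((j + 1 : ℕ) : ℝ) / 2) (by push_cast; ring),
    ← hpow (((j : ℝ) - 1) / 2) (-((j + 1 : ℕ) : ℝ) / 2) (by push_cast; ring)]
  field_simp
  push_cast
  ring_nf

lemma ballSumReal_mul_sin {q θ : ℝ} (hq : 0 < q) (hs : sin θ ≠ 0) (n : ℕ) :
    ballSumReal q θ n * sin θ =
      q ^ ((n : ℝ) / 2) * sin ((n + 1) * θ) + q ^ (((n : ℝ) - 1) / 2) * sin (n * θ) := by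
  induction n with
  | zero => simp [ballSumReal]
  | succ m ih =>
    have hterm := mul_sphericalReal_succ_mul_sin hq hs m
    rw [ballSumReal] at ih ⊢
    rw [sum_Icc_succ_top (by omega), Nat.add_sub_cancel]
    rw [show ((m + 1 : ℕ) : ℝ) + 1 = m + 2 by push_cast; ring,
      show ((m + 1 : ℕ) : ℝ) - 1 = m by push_cast; ring, Nat.cast_succ]
    linear_combination ih + hterm

theorem exists_mem_Ioo_mul_sin_add_mul_sin_eq_zero {a b : ℝ} (hb : 0 ≤ b) (hba : b ≤ a)
    {n : ℕ} (hn : n ≠ 0) :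
    ∃ θ ∈ Set.Ioo 0 π, a * sin ((n + 1) * θ) + b * sin (n * θ) = 0 := by
  have hn1 : (0 : ℝ) < n + 1 := by positivity
  have hn2 : (2 : ℝ) ≤ n + 1 := by norm_cast; omega
  let F : ℝ → ℝ := fun θ => a * sin ((n + 1) * θ) + b * sin (n * θ)
  have hθ₀ : 0 < π / (n + 1) := by positivity
  have hθ₀₁ : π / (n + 1) ≤ 3 * π / (2 * (n + 1)) := by
    rw [div_le_div_iff₀ hn1 (by positivity)]; nlinarith [pi_pos]
  have hθ₁ : 3 * π / (2 * (n + 1)) < π := by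
    rw [div_lt_iff₀ (by positivity)]; nlinarith [pi_pos]
  have hF₀ : 0 ≤ F (π / (n + 1)) := by
    have h1 : ((n : ℝ) + 1) * (π / (n + 1)) = π := by field_simp
    have h2 : (n : ℝ) * (π / (n + 1)) = π - π / (n + 1) := by field_simp; ring
    have := sin_pos_of_pos_of_lt_pi hθ₀ (hθ₀₁.trans_lt hθ₁)
    simp only [F, h1, h2, sin_pi, sin_pi_sub]
    nlinarith
  have hF₁ : F (3 * π / (2 * (n + 1))) ≤ 0 := by
    have h1 : ((n : ℝ) + 1) * (3 * π / (2 * (n + 1))) = π / 2 + π := by field_simp; ring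
    simp only [F, h1, sin_add_pi, sin_pi_div_two]
    nlinarith [sin_le_one (n * (3 * π / (2 * (n + 1))))]
  obtain ⟨θ, hθ, hFθ⟩ :=
    intermediate_value_Icc' hθ₀₁ (by fun_prop : Continuous F).continuousOn ⟨hF₁, hF₀⟩
  exact ⟨θ, ⟨hθ₀.trans_le hθ.1, hθ.2.trans_lt hθ₁⟩, hFθ⟩

/-- For every `n ≥ 1`, `ψ_z(n)` is real for real `z ∈ (0, τ/2)`, and `ψ_z(n)` vanishes at
some real `z ∈ (0, τ/2)`. -/
theorem stmt13 (q : ℝ) (hq : 1 < q) (n : ℕ) (hn : 1 ≤ n) :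
    (∀ z : ℝ, 0 < z → z < tauq q / 2 → (psiBall q (z : ℂ) n).im = 0) ∧
    ∃ z : ℝ, 0 < z ∧ z < tauq q / 2 ∧ psiBall q (z : ℂ) n = 0 := by
  have hq0 : 0 < q := one_pos.trans hq
  have hlog : 0 < log q := log_pos hq
  have hn0 : n ≠ 0 := Nat.one_le_iff_ne_zero.mp hn
  refine ⟨fun z _ _ => by rw [psiBall_ofReal hq0]; exact Complex.ofReal_im _, ?_⟩
  obtain ⟨θ, ⟨hθ0, hθπ⟩, hzero⟩ := exists_mem_Ioo_mul_sin_add_mul_sin_eq_zero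
    (rpow_nonneg hq0.le (((n : ℝ) - 1) / 2))
    (rpow_le_rpow_of_exponent_le hq.le (by linarith : ((n : ℝ) - 1) / 2 ≤ n / 2)) hn0
  have hsin : sin θ ≠ 0 := (sin_pos_of_pos_of_lt_pi hθ0 hθπ).ne'
  have hball : ballSumReal q θ n = 0 := by
    have h := ballSumReal_mul_sin hq0 hsin n
    rw [hzero] at h
    exact (mul_eq_zero.mp h).resolve_right hsin
  refine ⟨θ / log q, by positivity, ?_, ?_⟩
  · rw [tauq, mul_div_assoc, mul_div_cancel_left₀ _ two_ne_zero]
    exact div_lt_div_of_pos_right hθπ hlog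
  · rw [psiBall_ofReal hq0, div_mul_cancel₀ θ hlog.ne', hball, zero_div, Complex.ofReal_zero]
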